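/- Let G be a closed subgroup of the orthogonal group O(d) and x, z ∈ ℝ^d. If z ∈ U_x, then G_z ⊆ G_x. If in addition x ∈ P(G), then G_z = G_x and z ∈ P(G). -/

import Mathlib

open scoped RealInnerProductSpace

noncomputable section

/-- `d × d` real matrices. -/
abbrev Mat (d : ℕ) := Matrix (Fin d) (Fin d) ℝ

/-- Euclidean space `ℝ^d`. -/
abbrev Euc (d : ℕ) := EuclideanSpace ℝ (Fin d)

/-- The orthogonal group `O(d)`. -/
abbrev OG (d : ℕ) := Matrix.orthogonalGroup (Fin d) ℝ

variable {d : ℕ}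

/-- The action of an orthogonal matrix on Euclidean space. -/
def act (g : OG d) (x : Euc d) : Euc d := Matrix.toEuclideanLin (g : Mat d) x

lemma act_one (x : Euc d) : act (1 : OG d) x = x := by
  simp [act, Matrix.toEuclideanLin_apply, Matrix.one_mulVec]

lemma act_mul (a b : OG d) (x : Euc d) : act (a * b) x = act a (act b x) := by
  simp [act, Matrix.toEuclideanLin_apply, Matrix.mulVec_mulVec]

lemma act_inv_of_fix {g : OG d} {x : Euc d} (h : act g x = x) : act g⁻¹ x = x := by
  conv_lhs => rw [← h, ← act_mul, inv_mul_cancel, act_one]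

/-- The set of matrices underlying a subgroup `G ≤ O(d)`. -/
def matSet (G : Subgroup (OG d)) : Set (Mat d) := {m | ∃ g ∈ G, (g : Mat d) = m}

/-- The orbit `[x] = G ⬝ x`. -/
def orb (G : Subgroup (OG d)) (x : Euc d) : Set (Euc d) := {y | ∃ g ∈ G, act g x = y}

/-- The quotient metric `d([x],[y]) = inf_{g ∈ G} ‖g x − y‖`. -/
def qdist (G : Subgroup (OG d)) (x y : Euc d) : ℝ := ⨅ g : G, ‖act (g : OG d) x - y‖

/-- The max filtering map `⟪[x],[z]⟫ = sup_{g ∈ G} ⟨g x, z⟩`. -/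
def maxFilt (G : Subgroup (OG d)) (x z : Euc d) : ℝ := ⨆ g : G, ⟪act (g : OG d) x, z⟫

/-- The stabilizer `G_x = {g ∈ G : g x = x}` as a subgroup. -/
def stab (G : Subgroup (OG d)) (x : Euc d) : Subgroup (OG d) where
  carrier := {g | g ∈ G ∧ act g x = x}
  one_mem' := ⟨G.one_mem, act_one x⟩
  mul_mem' := fun ha hb => ⟨G.mul_mem ha.1 hb.1, by rw [act_mul, hb.2, ha.2]⟩
  inv_mem' := fun ha => ⟨G.inv_mem ha.1, act_inv_of_fix ha.2⟩

/-- The Lie algebra `𝔤` of `G`: matrices whose one-parameter exponential subgroup lies in `G`. -/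
def lieAlg (G : Subgroup (OG d)) : Set (Mat d) :=
  {A | ∀ t : ℝ, ∃ g ∈ G, (g : Mat d) = NormedSpace.exp (t • A)}

/-- The tangent space `T_x = 𝔤 ⬝ x` to the orbit at `x`. -/
def Tsp (G : Subgroup (OG d)) (x : Euc d) : Submodule ℝ (Euc d) :=
  Submodule.span ℝ {v | ∃ A ∈ lieAlg G, Matrix.toEuclideanLin A x = v}

/-- The normal space `N_x = T_x^⊥`. -/
def Nsp (G : Subgroup (OG d)) (x : Euc d) : Submodule ℝ (Euc d) := (Tsp G x)ᗮ

/-- The maximal orbit dimension `max_y dim T_y`. -/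
def orbDimMax (G : Subgroup (OG d)) : ℕ := ⨆ y : Euc d, Module.finrank ℝ (Tsp G y)

/-- The set of regular points `R(G)`. -/
def RG (G : Subgroup (OG d)) : Set (Euc d) :=
  {x | Module.finrank ℝ (Tsp G x) = orbDimMax G}

/-- The set of principal points `P(G)`. -/
def PG (G : Subgroup (OG d)) : Set (Euc d) :=
  {x | ∀ z : Euc d, stab G z ≤ stab G x → stab G z = stab G x}

/-- The regular Voronoi complexity `χ(G)`. -/
def chi (G : Subgroup (OG d)) : ℕ :=
  sSup {k : ℕ | ∃ x ∈ RG G, ∃ p ∈ RG G,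
    stab G p ≤ stab G x ∧ k = (stab G p).relIndex (stab G x)}

/-- The set of maximizers `{p ∈ [x] : ⟨p,z⟩ = ⟪[x],[z]⟫}`. -/
def argmaxSet (G : Subgroup (OG d)) (x z : Euc d) : Set (Euc d) :=
  {p | p ∈ orb G x ∧ ⟪p, z⟫ = maxFilt G x z}

/-- The unique Voronoi cell `U_x`. -/
def Ucell (G : Subgroup (OG d)) (x : Euc d) : Set (Euc d) :=
  {z | argmaxSet G x z = {x}}

/-- The open Voronoi cell `V_x`, the relative (intrinsic) interior of `U_x`. -/
def Vcell (G : Subgroup (OG d)) (x : Euc d) : Set (Euc d) :=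
  intrinsicInterior ℝ (Ucell G x)

/-- The open Voronoi diagram `Q_x`. -/
def Qdiag (G : Subgroup (OG d)) (x : Euc d) : Set (Euc d) :=
  ⋃ p ∈ orb G x, Vcell G p

/-- Membership `x ∈ V_z^{loc}` in the local open Voronoi cell. -/
def VlocMem (G : Subgroup (OG d)) (z x : Euc d) : Prop :=
  ∃ U V : Set (Euc d), IsOpen U ∧ z ∈ U ∧ IsOpen V ∧ x ∈ V ∧
    ∀ q ∈ V, ∃ p₀ : Euc d,
      {p | p ∈ orb G z ∩ U ∧
        ⟪p, q⟫ = ⨆ p' : (orb G z ∩ U : Set (Euc d)), ⟪(p' : Euc d), q⟫} = {p₀}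

/-- The max filter bank `Φ(x) = (⟪[x],[z_i]⟫)_{i=1}^n`. -/
def filterBank (G : Subgroup (OG d)) {n : ℕ} (z : Fin n → Euc d) (x : Euc d) :
    EuclideanSpace ℝ (Fin n) :=
  (WithLp.equiv 2 (Fin n → ℝ)).symm fun i => maxFilt G x (z i)

/-- `Φ` is locally lower Lipschitz at `x` (with respect to the quotient metric). -/
def LocLowerLip (G : Subgroup (OG d)) {n : ℕ}
    (Φ : Euc d → EuclideanSpace ℝ (Fin n)) (x : Euc d) : Prop :=
  ∃ α > (0 : ℝ), ∃ ε > (0 : ℝ), ∀ x' y' : Euc d,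
    qdist G x' x < ε → qdist G y' x < ε → α * qdist G x' y' ≤ ‖Φ x' - Φ y'‖

/-- `Φ` is bilipschitz with respect to the quotient metric. -/
def BiLip (G : Subgroup (OG d)) {n : ℕ}
    (Φ : Euc d → EuclideanSpace ℝ (Fin n)) : Prop :=
  ∃ α > (0 : ℝ), ∃ β > (0 : ℝ), ∀ x y : Euc d,
    α * qdist G x y ≤ ‖Φ x - Φ y‖ ∧ ‖Φ x - Φ y‖ ≤ β * qdist G x y

lemma inner_act {d : ℕ} (g : OG d) (u v : Euc d) : ⟪act g u, act g v⟫ = ⟪u, v⟫ := by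
  have h : (g : Mat d).conjTranspose * (g : Mat d) = 1 := by
    simpa [Matrix.star_eq_conjTranspose] using Matrix.UnitaryGroup.star_mul_self g
  simp only [act, Matrix.toEuclideanLin_apply, EuclideanSpace.inner_eq_star_dotProduct,
    Equiv.apply_symm_apply, Matrix.star_mulVec, Matrix.dotProduct_mulVec,
    Matrix.vecMul_vecMul, h, Matrix.vecMul_one]
  rw [dotProduct_comm, Matrix.dotProduct_mulVec, Matrix.vecMul_vecMul, h, Matrix.vecMul_one,
    dotProduct_comm]

lemma mem_stab_iff {d : ℕ} {G : Subgroup (OG d)} {x : Euc d} {g : OG d} :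
    g ∈ stab G x ↔ g ∈ G ∧ act g x = x := Iff.rfl

/-- If `z ∈ U_x` then `G_z ≤ G_x`; if in addition `x ∈ P(G)`, then
`G_z = G_x` and `z ∈ P(G)`. -/
theorem stab_le_of_mem_Ucell
    (d : ℕ) (G : Subgroup (OG d)) (hGclosed : IsClosed (matSet G)) (x z : Euc d)
    (hz : z ∈ Ucell G x) :
    stab G z ≤ stab G x ∧ (x ∈ PG G → stab G z = stab G x ∧ z ∈ PG G) := by
  have hset : argmaxSet G x z = {x} := hz
  have hx : x ∈ argmaxSet G x z := by rw [hset]; rfl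
  have hle : stab G z ≤ stab G x := by
    intro g hg
    rw [mem_stab_iff] at hg ⊢
    refine ⟨hg.1, ?_⟩
    have hmem : act g x ∈ argmaxSet G x z := by
      refine ⟨⟨g, hg.1, rfl⟩, ?_⟩
      calc ⟪act g x, z⟫ = ⟪act g x, act g z⟫ := by rw [hg.2]
        _ = ⟪x, z⟫ := inner_act g x z
        _ = maxFilt G x z := hx.2
    rw [hset] at hmem
    exact hmem
  refine ⟨hle, fun hP => ?_⟩
  have he : stab G z = stab G x := hP z hle
  refine ⟨he, fun w hw => ?_⟩
  rw [he] at hw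
  exact (hP w hw).trans he.symm

end
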